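/- Let H_1, …, H_L be Hermitian n×n complex matrices with Λ := max_{1≤i≤L} ‖H_i‖, let k ≥ 1, λ ∈ ℂ, κ := 2·5^{k−1}. Set V(λ/2) := exp(λ Σ_{i=1}^L H_i / 2) and D(λ/2) := R_{2k}(V(λ/2)) − R_{2k}(S^{(2k)}(λ/2)). Then ‖V(λ/2)† D(λ/2) + D(λ/2) V(λ/2)†‖ ≤ 4 (κ|λ|LΛ/2)^{2k+1} / (2k+1)! · exp([κ+1]|λ|LΛ/2). -/

import Mathlib

open scoped Nat Matrix.Norms.L2Operator
open scoped Matrix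

/-- The coefficient `p_k := 1 / (4 − 4^{1/(2k−1)})` in the recursive Trotter–Suzuki
construction. -/
noncomputable def suzukiP (k : ℕ) : ℝ :=
  1 / (4 - (4 : ℝ) ^ ((1 : ℝ) / (2 * (k : ℝ) - 1)))

/-- The `(2k)`-th order Trotter–Suzuki product formula `S^{(2k)}(λ)` for the Hermitian matrices
`H_1, …, H_L`: `suzuki H k λ = S^{(2k)}(λ)`, defined by
`S^{(2)}(λ) := ∏_{i=1}^L e^{λ H_i/2} · ∏_{i=L}^1 e^{λ H_i/2}` and, for `k ≥ 2`,
`S^{(2k)}(λ) := [S^{(2k−2)}(p_k λ)]^2 · S^{(2k−2)}((1−4p_k)λ) · [S^{(2k−2)}(p_k λ)]^2`. -/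
noncomputable def suzuki {n L : ℕ} (H : Fin L → Matrix (Fin n) (Fin n) ℂ) :
    ℕ → ℂ → Matrix (Fin n) (Fin n) ℂ
  | 0, _ => 1
  | 1, lam =>
      (List.ofFn fun i : Fin L => NormedSpace.exp ((lam / 2) • H i)).prod *
        (List.ofFn fun i : Fin L => NormedSpace.exp ((lam / 2) • H i.rev)).prod
  | k + 2, lam =>
      suzuki H (k + 1) ((suzukiP (k + 2) : ℂ) * lam) ^ 2 *
        suzuki H (k + 1) ((1 - 4 * (suzukiP (k + 2) : ℂ)) * lam) *
          suzuki H (k + 1) ((suzukiP (k + 2) : ℂ) * lam) ^ 2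

/-!
Say that `f : ℂ → A` is exp-majorized by `M` if it is the sum of an everywhere convergent power
series `∑ μ^j c_j` with `‖c_j‖ ≤ M^j / j!`, i.e. coefficientwise dominated by `e^{Mμ}`.
Rescaling the variable by `|a| ≤ s` multiplies `M` by `s`, products add the `M`s (Cauchy product
and the binomial theorem), and `μ ↦ e^{μa}` is majorized by `‖a‖`. Since every Suzuki coefficient
`p_k` lies in `(0, 1/2]`, each of the five factors of the recursion rescales by at most `1`, so
`S^{(2k)}` is majorized by `5^{k-1} L Λ`. The tail of order `m` of a series majorized by `M` is at
most `(|μ|M)^m/m! · e^{|μ|M}`, which bounds both remainders in `D`, and finally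
`‖V^† D + D V^†‖ ≤ 2 ‖V‖ ‖D‖` with `‖V‖ ≤ e^{|λ| L Λ / 2}`.
-/

open Finset NormedSpace

namespace CStarRing

lemma norm_star_mul_add_mul_star_le {A : Type*} [NonUnitalNormedRing A] [StarRing A]
    [CStarRing A] (a d : A) : ‖star a * d + d * star a‖ ≤ 2 * ‖a‖ * ‖d‖ := by
  calc ‖star a * d + d * star a‖ ≤ ‖star a‖ * ‖d‖ + ‖d‖ * ‖star a‖ :=
        norm_add_le_of_le (norm_mul_le _ _) (norm_mul_le _ _)
    _ = 2 * ‖a‖ * ‖d‖ := by rw [norm_star]; ring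

variable {A : Type*} [NormedRing A] [StarRing A] [CStarRing A]

lemma norm_one_le : ‖(1 : A)‖ ≤ 1 := by
  rcases subsingleton_or_nontrivial A with _ | _
  · simp [Subsingleton.elim (1 : A) 0]
  · rw [CStarRing.norm_one]

lemma norm_pow_le (a : A) (j : ℕ) : ‖a ^ j‖ ≤ ‖a‖ ^ j := by
  rcases j with _ | j
  · simpa using norm_one_le
  · exact norm_pow_le' a j.succ_pos

end CStarRing

lemma pow_add_div_factorial_le {y : ℝ} (hy : 0 ≤ y) (m j : ℕ) :
    y ^ (m + j) / (m + j)! ≤ y ^ m / m ! * (y ^ j / j !) := by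
  have hfac : (m ! * j ! : ℝ) ≤ (m + j)! := by
    exact_mod_cast Nat.le_of_dvd (Nat.factorial_pos _)
      (Nat.factorial_mul_factorial_dvd_factorial_add m j)
  rw [div_mul_div_comm, pow_add]
  gcongr

lemma sum_range_pow_div_factorial_mul (M N : ℝ) (j : ℕ) :
    ∑ i ∈ range (j + 1), M ^ i / i ! * (N ^ (j - i) / (j - i)!) = (M + N) ^ j / j ! := by
  rw [add_pow, Finset.sum_div]
  refine Finset.sum_congr rfl fun i hi => ?_
  have hij : i ≤ j := Finset.mem_range_succ_iff.mp hi
  have hfac : (j.choose i * i ! * (j - i)! : ℝ) = j ! := by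
    exact_mod_cast Nat.choose_mul_factorial_mul_factorial hij
  have hchoose : (j.choose i : ℝ) ≠ 0 := by exact_mod_cast (Nat.choose_pos hij).ne'
  rw [← hfac]
  field_simp

lemma norm_tsum_pow_smul_tail_le {E : Type*} [NormedAddCommGroup E] [NormedSpace ℂ E]
    {c : ℕ → E} {M : ℝ} (hc : ∀ j, ‖c j‖ ≤ M ^ j / j !) (μ : ℂ) (m : ℕ) :
    ‖∑' j, μ ^ (m + j) • c (m + j)‖ ≤ (‖μ‖ * M) ^ m / m ! * Real.exp (‖μ‖ * M) := by
  have hM : 0 ≤ M := (norm_nonneg _).trans (by simpa using hc 1)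
  have hy : 0 ≤ ‖μ‖ * M := by positivity
  rw [Real.exp_eq_exp_ℝ]
  refine tsum_of_norm_bounded ((expSeries_div_hasSum_exp (‖μ‖ * M)).mul_left _) fun j => ?_
  calc ‖μ ^ (m + j) • c (m + j)‖ ≤ ‖μ‖ ^ (m + j) * (M ^ (m + j) / (m + j)!) := by
        rw [norm_smul, norm_pow]; gcongr; exact hc _
    _ = (‖μ‖ * M) ^ (m + j) / (m + j)! := by rw [mul_pow, mul_div_assoc]
    _ ≤ _ := pow_add_div_factorial_le hy m j

lemma norm_tsum_pow_smul_tail_sub_le {E : Type*} [NormedAddCommGroup E] [NormedSpace ℂ E]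
    {c d : ℕ → E} {M : ℝ} (hc : ∀ j, ‖c j‖ ≤ M ^ j / j !) (hd : ∀ j, ‖d j‖ ≤ M ^ j / j !)
    (μ : ℂ) (m : ℕ) :
    ‖∑' j, μ ^ (m + j) • c (m + j) - ∑' j, μ ^ (m + j) • d (m + j)‖ ≤
      2 * ((‖μ‖ * M) ^ m / m ! * Real.exp (‖μ‖ * M)) := by
  rw [two_mul]
  exact norm_sub_le_of_le (norm_tsum_pow_smul_tail_le hc μ m) (norm_tsum_pow_smul_tail_le hd μ m)

lemma norm_inv_factorial_smul_pow_le {A : Type*} [NormedRing A] [StarRing A] [CStarRing A]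
    [NormedAlgebra ℂ A] (a : A) (j : ℕ) : ‖(j ! : ℂ)⁻¹ • a ^ j‖ ≤ ‖a‖ ^ j / j ! := by
  rw [norm_smul, norm_inv, Complex.norm_natCast, inv_mul_eq_div]
  gcongr
  exact CStarRing.norm_pow_le a j

lemma eq_of_forall_hasSum_pow_smul {E : Type*} [NormedAddCommGroup E] [NormedSpace ℂ E]
    {f : ℂ → E} {c : ℕ → E} (hc : ∀ μ : ℂ, HasSum (fun j => μ ^ j • c j) (f μ))
    {d : ℕ → E} (hd : ∀ μ : ℂ, HasSum (fun j => μ ^ j • d j) (f μ)) : c = d := by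
  have hasFPowerSeriesAt {c : ℕ → E} (hc : ∀ μ : ℂ, HasSum (fun j => μ ^ j • c j) (f μ)) :
      HasFPowerSeriesAt f (fun j => ContinuousMultilinearMap.mkPiRing ℂ (Fin j) (c j)) 0 :=
    hasFPowerSeriesAt_iff.2 (.of_forall fun μ => by
      simpa [FormalMultilinearSeries.coeff] using hc μ)
  funext j
  simpa [FormalMultilinearSeries.coeff] using
    congrArg (·.coeff j) ((hasFPowerSeriesAt hc).eq_formalMultilinearSeries (hasFPowerSeriesAt hd))

def ExpMajorized {E : Type*} [NormedAddCommGroup E] [NormedSpace ℂ E] (f : ℂ → E) (M : ℝ) :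
    Prop :=
  ∃ c : ℕ → E, (∀ j, ‖c j‖ ≤ M ^ j / j !) ∧ ∀ μ : ℂ, HasSum (fun j => μ ^ j • c j) (f μ)

namespace ExpMajorized

section NormedSpace

variable {E : Type*} [NormedAddCommGroup E] [NormedSpace ℂ E] {f : ℂ → E} {M : ℝ}

lemma nonneg (h : ExpMajorized f M) : 0 ≤ M := by
  obtain ⟨c, hc, -⟩ := h
  exact (norm_nonneg _).trans (by simpa using hc 1)

lemma mono (h : ExpMajorized f M) {M' : ℝ} (hM : M ≤ M') : ExpMajorized f M' := by
  have := h.nonneg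
  obtain ⟨c, hc, hf⟩ := h
  exact ⟨c, fun j => (hc j).trans (by gcongr), hf⟩

lemma congr (h : ExpMajorized f M) {g : ℂ → E} (hfg : ∀ μ, f μ = g μ) : ExpMajorized g M :=
  funext hfg ▸ h

lemma comp_mul (h : ExpMajorized f M) {a : ℂ} {s : ℝ} (ha : ‖a‖ ≤ s) :
    ExpMajorized (fun μ => f (a * μ)) (s * M) := by
  have hM := h.nonneg
  obtain ⟨c, hc, hf⟩ := h
  refine ⟨fun j => a ^ j • c j, fun j => ?_, fun μ => ?_⟩
  · rw [norm_smul, norm_pow, mul_pow, mul_div_assoc]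
    exact mul_le_mul (pow_le_pow_left₀ (norm_nonneg _) ha j) (hc j) (norm_nonneg _)
      (pow_nonneg ((norm_nonneg _).trans ha) j)
  · simpa only [smul_smul, mul_pow, mul_comm] using hf (a * μ)

lemma norm_coeff_le (h : ExpMajorized f M) {C : ℕ → E}
    (hC : ∀ μ : ℂ, HasSum (fun j => μ ^ j • C j) (f μ)) (j : ℕ) : ‖C j‖ ≤ M ^ j / j ! := by
  obtain ⟨c, hc, hf⟩ := h
  exact eq_of_forall_hasSum_pow_smul hf hC ▸ hc j

lemma norm_le (h : ExpMajorized f M) (μ : ℂ) : ‖f μ‖ ≤ Real.exp (‖μ‖ * M) := by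
  obtain ⟨c, hc, hf⟩ := h
  simpa [hf μ |>.tsum_eq] using norm_tsum_pow_smul_tail_le hc μ 0

end NormedSpace

section NormedAlgebra

variable {A : Type*} [NormedRing A] [NormedAlgebra ℂ A] [CompleteSpace A] {f g : ℂ → A} {M N : ℝ}

lemma mul (hf : ExpMajorized f M) (hg : ExpMajorized g N) :
    ExpMajorized (fun μ => f μ * g μ) (M + N) := by
  obtain ⟨a, ha, hfa⟩ := hf
  obtain ⟨b, hb, hgb⟩ := hg
  refine ⟨fun j => ∑ i ∈ range (j + 1), a i * b (j - i), fun j => ?_, fun μ => ?_⟩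
  · rw [← sum_range_pow_div_factorial_mul]
    refine (norm_sum_le _ _).trans (Finset.sum_le_sum fun i _ => ?_)
    exact (norm_mul_le _ _).trans
      (mul_le_mul (ha i) (hb _) (norm_nonneg _) ((norm_nonneg _).trans (ha i)))
  · have summable {c : ℕ → A} {M : ℝ} (hc : ∀ j, ‖c j‖ ≤ M ^ j / j !) :
        Summable fun j => ‖μ ^ j • c j‖ := by
      refine .of_nonneg_of_le (fun _ => norm_nonneg _) (fun j => ?_)
        (Real.summable_pow_div_factorial (‖μ‖ * M))
      rw [norm_smul, norm_pow, mul_pow, mul_div_assoc]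
      gcongr
      exact hc j
    have h := hasSum_sum_range_mul_of_summable_norm (summable ha) (summable hb)
    rw [(hfa μ).tsum_eq, (hgb μ).tsum_eq] at h
    refine h.congr_fun fun j => ?_
    rw [Finset.smul_sum]
    refine Finset.sum_congr rfl fun i hi => ?_
    rw [smul_mul_smul_comm, ← pow_add, Nat.add_sub_cancel' (Finset.mem_range_succ_iff.mp hi)]

end NormedAlgebra

section CStarAlgebra

variable {A : Type*} [CStarAlgebra A] {M : ℝ}

lemma one : ExpMajorized (fun _ => (1 : A)) 0 := by
  refine ⟨fun j => if j = 0 then 1 else 0, fun j => ?_, fun μ => ?_⟩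
  · rcases j with _ | j
    · simpa using CStarRing.norm_one_le
    · simp
  · refine (hasSum_ite_eq 0 (1 : A)).congr_fun fun j => ?_
    rcases j with _ | j <;> simp

lemma exp_smul (a : A) : ExpMajorized (fun μ => exp (μ • a)) ‖a‖ := by
  refine ⟨fun j => (j ! : ℂ)⁻¹ • a ^ j, norm_inv_factorial_smul_pow_le a, fun μ => ?_⟩
  simpa only [smul_pow, smul_comm _ (μ ^ _)] using exp_series_hasSum_exp' (𝕂 := ℂ) (μ • a)

lemma list_ofFn_prod {L : ℕ} {f : Fin L → ℂ → A} (hf : ∀ i, ExpMajorized (f i) M) :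
    ExpMajorized (fun μ => (List.ofFn fun i => f i μ).prod) (L * M) := by
  induction L with
  | zero => simpa using one
  | succ L ih =>
    refine (((hf 0).mul (ih fun i => hf i.succ)).mono (le_of_eq ?_)).congr fun μ => ?_
    · push_cast
      ring
    · simp only [List.ofFn_succ, List.prod_cons]

end CStarAlgebra

end ExpMajorized

lemma suzukiP_pos_le_half {m : ℕ} (hm : 2 ≤ m) : 0 < suzukiP m ∧ suzukiP m ≤ 1 / 2 := by
  have hexp : 1 / (2 * (m : ℝ) - 1) ≤ 1 / 2 := by
    have : (2 : ℝ) ≤ m := by exact_mod_cast hm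
    apply one_div_le_one_div_of_le <;> linarith
  have hroot : (4 : ℝ) ^ (1 / (2 * (m : ℝ) - 1)) ≤ 2 :=
    calc (4 : ℝ) ^ (1 / (2 * (m : ℝ) - 1)) ≤ 4 ^ (1 / 2 : ℝ) :=
          Real.rpow_le_rpow_of_exponent_le (by norm_num) hexp
      _ = 2 := by
        rw [← Real.sqrt_eq_rpow, show (4 : ℝ) = 2 ^ 2 by norm_num, Real.sqrt_sq two_pos.le]
  rw [suzukiP]
  constructor
  · apply div_pos one_pos; linarith
  · rw [div_le_div_iff₀ (by linarith) two_pos]; linarith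

theorem expMajorized_suzuki {n L : ℕ} (H : Fin L → Matrix (Fin n) (Fin n) ℂ) {Λ : ℝ}
    (hH : ∀ i, ‖H i‖ ≤ Λ) (hΛ : 0 ≤ Λ) :
    ∀ k, ExpMajorized (suzuki H k) (5 ^ (k - 1) * L * Λ)
  | 0 => ExpMajorized.one.mono (by positivity)
  | 1 => by
    have hexp (i : Fin L) : ExpMajorized (fun μ : ℂ => exp ((μ / 2) • H i)) (2⁻¹ * Λ) := by
      simpa only [div_eq_inv_mul] using
        ((ExpMajorized.exp_smul (H i)).comp_mul (s := 2⁻¹) (by simp)).mono (by gcongr; exact hH i)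
    exact ((ExpMajorized.list_ofFn_prod hexp).mul
      (ExpMajorized.list_ofFn_prod fun i => hexp i.rev)).mono (le_of_eq (by ring))
  | k + 2 => by
    obtain ⟨hp0, hp⟩ := suzukiP_pos_le_half (m := k + 2) (by omega)
    have hf := expMajorized_suzuki H hH hΛ (k + 1)
    have outer := hf.comp_mul (a := (suzukiP (k + 2) : ℂ)) (s := 1) (by
      rw [Complex.norm_real, Real.norm_of_nonneg hp0.le]; linarith)
    have middle := hf.comp_mul (a := 1 - 4 * (suzukiP (k + 2) : ℂ)) (s := 1) (by
      rw [← Complex.ofReal_ofNat, ← Complex.ofReal_mul, ← Complex.ofReal_one,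
        ← Complex.ofReal_sub, Complex.norm_real, Real.norm_eq_abs, abs_le]
      constructor <;> linarith)
    have hprod := ((outer.mul outer).mul middle).mul (outer.mul outer)
    refine (hprod.mono (le_of_eq ?_)).congr fun μ => ?_
    · rw [show k + 2 - 1 = k + 1 by omega, Nat.add_sub_cancel, pow_succ]
      ring
    · simp only [suzuki, sq, mul_assoc]

theorem opNorm_Vdagger_D_add_D_Vdagger_le_general {n L : ℕ}
    (H : Fin L → Matrix (Fin n) (Fin n) ℂ)
    (Λ : ℝ) (hΛ : IsGreatest (Set.range fun i => ‖H i‖) Λ)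
    (k : ℕ) (lam : ℂ)
    (C : ℕ → Matrix (Fin n) (Fin n) ℂ)
    (hC : ∀ μ : ℂ, HasSum (fun j : ℕ => μ ^ j • C j) (suzuki H k (μ / 2))) :
    ‖(NormedSpace.exp ((lam / 2) • ∑ i, H i))ᴴ *
          ((∑' j : ℕ, lam ^ (2 * k + 1 + j) •
              (((2 * k + 1 + j)! : ℂ)⁻¹ • ((2 : ℂ)⁻¹ • ∑ i, H i) ^ (2 * k + 1 + j))) -
            ∑' j : ℕ, lam ^ (2 * k + 1 + j) • C (2 * k + 1 + j)) +
        ((∑' j : ℕ, lam ^ (2 * k + 1 + j) •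
              (((2 * k + 1 + j)! : ℂ)⁻¹ • ((2 : ℂ)⁻¹ • ∑ i, H i) ^ (2 * k + 1 + j))) -
            ∑' j : ℕ, lam ^ (2 * k + 1 + j) • C (2 * k + 1 + j)) *
          (NormedSpace.exp ((lam / 2) • ∑ i, H i))ᴴ‖ ≤
      4 * ((2 * 5 ^ (k - 1) : ℝ) * ‖lam‖ * L * Λ / 2) ^ (2 * k + 1) /
          ((2 * k + 1)! : ℝ) *
        Real.exp (((2 * 5 ^ (k - 1) : ℝ) + 1) * ‖lam‖ * L * Λ / 2) := by
  obtain ⟨i₀, hi₀⟩ := hΛ.1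
  have hH (i : Fin L) : ‖H i‖ ≤ Λ := hΛ.2 ⟨i, rfl⟩
  have hΛ0 : 0 ≤ Λ := hi₀ ▸ norm_nonneg _
  set a : Matrix (Fin n) (Fin n) ℂ := (2 : ℂ)⁻¹ • ∑ i, H i
  set M : ℝ := 5 ^ (k - 1) * L * Λ
  have ha : ‖a‖ ≤ L * Λ / 2 :=
    calc ‖a‖ = ‖∑ i, H i‖ / 2 := by rw [norm_smul, norm_inv, Complex.norm_ofNat, inv_mul_eq_div]
      _ ≤ (∑ _i : Fin L, Λ) / 2 := by gcongr; exact norm_sum_le_of_le _ fun i _ => hH i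
      _ = L * Λ / 2 := by simp
  have haM : ‖a‖ ≤ M := ha.trans <| by
    have : (1 : ℝ) ≤ 5 ^ (k - 1) := one_le_pow₀ (by norm_num)
    have : (0 : ℝ) ≤ L * Λ := by positivity
    simp only [M]; nlinarith
  have hCM : ∀ j, ‖C j‖ ≤ M ^ j / j ! :=
    (((expMajorized_suzuki H hH hΛ0 k).comp_mul (a := 2⁻¹) (s := 1) (by norm_num)).mono
      (one_mul M).le).norm_coeff_le (by simpa only [div_eq_inv_mul] using hC)
  have hD := norm_tsum_pow_smul_tail_sub_le
    (fun j => (norm_inv_factorial_smul_pow_le a j).trans (by gcongr)) hCM lam (2 * k + 1)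
  have hVa : (lam / 2) • ∑ i, H i = lam • a := by rw [smul_smul, div_eq_mul_inv]
  rw [hVa, ← Matrix.star_eq_conjTranspose]
  refine (CStarRing.norm_star_mul_add_mul_star_le _ _).trans ?_
  calc _ ≤ 2 * Real.exp (‖lam‖ * (L * Λ / 2)) *
        (2 * ((‖lam‖ * M) ^ (2 * k + 1) / (2 * k + 1)! * Real.exp (‖lam‖ * M))) := by
        gcongr
        exact ((ExpMajorized.exp_smul a).norm_le lam).trans (by gcongr)
    _ = _ := by
      rw [show ((2 * 5 ^ (k - 1) : ℝ) + 1) * ‖lam‖ * L * Λ / 2 = ‖lam‖ * M + ‖lam‖ * (L * Λ / 2)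
        by ring, Real.exp_add]
      ring

/-- Let `H_1, …, H_L` (`L ≥ 1`) be Hermitian `n×n` complex matrices with
`Λ := max_i ‖H_i‖`, let `k ≥ 1`, `λ ∈ ℂ` and `κ := 2·5^{k−1}`.  With
`V(λ/2) := exp(λ Σ_i H_i / 2)` and
`D(λ/2) := R_{2k}(V(λ/2)) − R_{2k}(S^{(2k)}(λ/2))` (where `C_j` are the power-series
coefficients of the `(2k)`-th order Trotter–Suzuki formula `S^{(2k)}(λ/2)` in `λ`), we have
`‖V(λ/2)† D(λ/2) + D(λ/2) V(λ/2)†‖ ≤ 4 (κ|λ|LΛ/2)^{2k+1} / (2k+1)! · exp([κ+1]|λ|LΛ/2)`. -/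
theorem opNorm_Vdagger_D_add_D_Vdagger_le {n L : ℕ} (hL : 1 ≤ L)
    (H : Fin L → Matrix (Fin n) (Fin n) ℂ) (hH : ∀ i, (H i).IsHermitian)
    (Λ : ℝ) (hΛ : IsGreatest (Set.range fun i => ‖H i‖) Λ)
    (k : ℕ) (hk : 1 ≤ k) (lam : ℂ)
    (C : ℕ → Matrix (Fin n) (Fin n) ℂ)
    (hC : ∀ μ : ℂ, HasSum (fun j : ℕ => μ ^ j • C j) (suzuki H k (μ / 2))) :
    ‖(NormedSpace.exp ((lam / 2) • ∑ i, H i))ᴴ *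
          ((∑' j : ℕ, lam ^ (2 * k + 1 + j) •
              (((2 * k + 1 + j)! : ℂ)⁻¹ • ((2 : ℂ)⁻¹ • ∑ i, H i) ^ (2 * k + 1 + j))) -
            ∑' j : ℕ, lam ^ (2 * k + 1 + j) • C (2 * k + 1 + j)) +
        ((∑' j : ℕ, lam ^ (2 * k + 1 + j) •
              (((2 * k + 1 + j)! : ℂ)⁻¹ • ((2 : ℂ)⁻¹ • ∑ i, H i) ^ (2 * k + 1 + j))) -
            ∑' j : ℕ, lam ^ (2 * k + 1 + j) • C (2 * k + 1 + j)) *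
          (NormedSpace.exp ((lam / 2) • ∑ i, H i))ᴴ‖ ≤
      4 * ((2 * 5 ^ (k - 1) : ℝ) * ‖lam‖ * L * Λ / 2) ^ (2 * k + 1) /
          ((2 * k + 1)! : ℝ) *
        Real.exp (((2 * 5 ^ (k - 1) : ℝ) + 1) * ‖lam‖ * L * Λ / 2) :=
  opNorm_Vdagger_D_add_D_Vdagger_le_general H Λ hΛ k lam C hC
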